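/- arXiv:2401.01446 — 5 statements merged into one kernel-verified Lean document; each statement's English description precedes it below -/
import Mathlib

section
/- Let A be a countable-dimensional algebra over the complex numbers and M a simple A-module. Then every A-module endomorphism of M is a scalar multiple of the identity. -/
open Cardinal

section Aux

variable {D : Type*} [DivisionRing D]

private theorem self_mem_centralizer_singleton (a : D) : a ∈ Set.centralizer {a} :=
  fun g hg => by rw [Set.mem_singleton_iff] at hg; rw [hg]

/-- The double centralizer of an element of a division ring, as a subfield. -/
private def dblCentralizer (a : D) : Subfield D where
  __ := Subring.centralizer (Set.centralizer {a})
  inv_mem' := fun _ hx => Set.inv_mem_centralizer₀ hx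

private theorem mem_dblCentralizer {a x : D} :
    x ∈ dblCentralizer a ↔ ∀ y ∈ Set.centralizer {a}, y * x = x * y := Iff.rfl

private theorem self_mem_dblCentralizer (a : D) : a ∈ dblCentralizer a := fun y hy =>
  (hy a rfl).symm

private theorem dblCentralizer_le_centralizer (a : D) {x : D} (hx : x ∈ dblCentralizer a) :
    x ∈ Set.centralizer {a} := fun m hm => by
  rw [Set.mem_singleton_iff] at hm
  rw [hm]
  exact hx a (self_mem_centralizer_singleton a)

private theorem dblCentralizer_comm (a : D) (x y : ↥(dblCentralizer a)) : x * y = y * x := by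
  have := x.2 y.1 (dblCentralizer_le_centralizer a y.2)
  exact Subtype.ext this.symm

/-- The double centralizer is a (commutative) field. -/
@[reducible]
noncomputable def dblCentralizerField (a : D) : Field ↥(dblCentralizer a) :=
  { (inferInstance : DivisionRing ↥(dblCentralizer a)) with
    mul_comm := dblCentralizer_comm a }

end Aux

private theorem dixmier_aux {A : Type u} {M : Type v} [Ring A] [Algebra ℂ A]
    [AddCommGroup M] [Module A M] [Module ℂ M] [IsScalarTower ℂ A M]
    (hcount : Module.rank ℂ A ≤ Cardinal.aleph0)
    [IsSimpleModule A M] (φ : M →ₗ[A] M) :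
    ∃ c : ℂ, ∀ m : M, φ m = c • m := by
  classical
  haveI : SMulCommClass A ℂ M := SMulCommClass.symm _ _ _
  haveI : Nontrivial M := IsSimpleModule.nontrivial A M
  obtain ⟨m0, hm0⟩ := exists_ne (0 : M)
  -- M has countable rank over ℂ
  have hMrank : Module.rank ℂ M ≤ ℵ₀ := by
    let g : A →ₗ[ℂ] M :=
      { toFun := fun a => a • m0
        map_add' := fun a b => add_smul a b m0
        map_smul' := fun c a => smul_assoc c a m0 }
    have hg : Function.Surjective g :=
      IsSimpleModule.toSpanSingleton_surjective A hm0
    have h1 : Cardinal.lift.{u} (Module.rank ℂ M) ≤ Cardinal.lift.{v} (Module.rank ℂ A) :=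
      g.lift_rank_le_of_surjective hg
    have h2 : Cardinal.lift.{v} (Module.rank ℂ A) ≤ Cardinal.lift.{v} (ℵ₀ : Cardinal.{u}) :=
      Cardinal.lift_le.mpr hcount
    rw [Cardinal.lift_aleph0] at h2
    have h3 := h1.trans h2
    rwa [← Cardinal.lift_aleph0.{u,v}, Cardinal.lift_le] at h3
  -- the endomorphism ring D := Module.End A M is a division ring (Schur's lemma)
  letI : DivisionRing (Module.End A M) := Module.End.instDivisionRing
  -- rank of D over ℂ is countable: evaluation at m0 is injective ℂ-linear
  have hDrank : Module.rank ℂ (Module.End A M) ≤ ℵ₀ := by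
    let e : Module.End A M →ₗ[ℂ] M :=
      { toFun := fun ψ => ψ m0
        map_add' := fun ψ₁ ψ₂ => rfl
        map_smul' := fun c ψ => rfl }
    have he : Function.Injective e := by
      intro ψ₁ ψ₂ h
      simp only [e, LinearMap.coe_mk, AddHom.coe_mk] at h
      have h0 : m0 ∈ LinearMap.ker (ψ₁ - ψ₂) := by
        rw [LinearMap.mem_ker, LinearMap.sub_apply, sub_eq_zero]; exact h
      have hker : LinearMap.ker (ψ₁ - ψ₂) = ⊤ := by
        rcases eq_bot_or_eq_top (LinearMap.ker (ψ₁ - ψ₂)) with hk | hk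
        · rw [hk, Submodule.mem_bot] at h0; exact absurd h0 hm0
        · exact hk
      exact sub_eq_zero.mp (LinearMap.ker_eq_top.mp hker)
    exact (e.rank_le_of_injective he).trans hMrank
  -- the double centralizer field K of φ
  let K := dblCentralizer (φ : Module.End A M)
  letI : Field ↥K := dblCentralizerField (φ : Module.End A M)
  have halgmem : ∀ c : ℂ, (algebraMap ℂ (Module.End A M) c) ∈ K := fun c y _ => by
    exact (Algebra.commutes c y).symm
  let f : ℂ →+* ↥K :=
    { toFun := fun c => ⟨algebraMap ℂ (Module.End A M) c, halgmem c⟩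
      map_one' := by apply Subtype.ext; exact map_one (algebraMap ℂ (Module.End A M))
      map_mul' := fun a b => by apply Subtype.ext; exact map_mul (algebraMap ℂ (Module.End A M)) a b
      map_zero' := by apply Subtype.ext; exact map_zero (algebraMap ℂ (Module.End A M))
      map_add' := fun a b => by apply Subtype.ext; exact map_add (algebraMap ℂ (Module.End A M)) a b }
  letI : Algebra ℂ ↥K := f.toAlgebra
  let x : ↥K := ⟨(φ : Module.End A M), self_mem_dblCentralizer _⟩
  -- K has countable rank over ℂ
  have hKrank : Module.rank ℂ ↥K ≤ ℵ₀ := by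
    let ι : ↥K →ₗ[ℂ] Module.End A M :=
      { toFun := Subtype.val
        map_add' := fun a b => by exact rfl
        map_smul' := fun c a => by
          show ((c • a : ↥K) : Module.End A M) = c • (a : Module.End A M)
          rw [Algebra.smul_def, Algebra.smul_def, RingHom.algebraMap_toAlgebra]
          exact rfl }
    exact (ι.rank_le_of_injective Subtype.val_injective).trans hDrank
  -- x is algebraic over ℂ
  have halg : IsAlgebraic ℂ x := by
    by_contra hT
    have hT' : Transcendental ℂ x := hT
    have h := hT'.linearIndependent_sub_inv.cardinal_lift_le_rank
    have h3 : Cardinal.lift.{0} (Module.rank ℂ ↥K) ≤ Cardinal.lift.{0} (ℵ₀ : Cardinal.{v}) :=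
      Cardinal.lift_le.mpr hKrank
    have h4 := h.trans h3
    simp only [Cardinal.lift_aleph0, mk_complex, Cardinal.lift_continuum] at h4
    exact absurd h4 Cardinal.aleph0_lt_continuum.not_ge
  -- ℂ is algebraically closed, so x is a scalar
  obtain ⟨c, hc⟩ : ∃ c : ℂ, algebraMap ℂ ↥K c = x := by
    have hint : IsIntegral ℂ x := halg.isIntegral
    have h1 : (minpoly ℂ x).degree = 1 :=
      (IsAlgClosed.splits (minpoly ℂ x)).degree_eq_one_of_irreducible
        (minpoly.irreducible hint)
    exact (minpoly.degree_eq_one_iff).mp h1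
  refine ⟨c, fun m => ?_⟩
  have hφ : (algebraMap ℂ (Module.End A M) c) = (φ : Module.End A M) := by
    have h := congrArg Subtype.val hc
    rw [RingHom.algebraMap_toAlgebra] at h
    exact h
  have hφ' : φ = c • (LinearMap.id : M →ₗ[A] M) := by
    rw [← hφ]; rfl
  rw [hφ']
  simp

/-- **Dixmier's lemma.** Let `A` be a countable-dimensional algebra over `ℂ` and `M` a
simple `A`-module. Then every `A`-module endomorphism of `M` is a scalar multiple of the
identity. -/
theorem stmt0 {A M : Type*} [Ring A] [Algebra ℂ A]
    [AddCommGroup M] [Module A M] [Module ℂ M] [IsScalarTower ℂ A M]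
    (hcount : Module.rank ℂ A ≤ Cardinal.aleph0)
    [IsSimpleModule A M] (φ : M →ₗ[A] M) :
    ∃ c : ℂ, ∀ m : M, φ m = c • m := dixmier_aux hcount φ
end

section
/- Let f₁, …, fₙ be a regular sequence in a commutative ring R. Then the Koszul complex K_R(f₁, …, fₙ) is exact in negative degrees, and its zeroth cohomology is R/(f₁, …, fₙ). -/
/-- The Koszul complex `K_R(f₁, …, fₙ) = K_R(f₁) ⊗_R ⋯ ⊗_R K_R(fₙ)` in its standard
explicit model: the degree `−p` term is free with basis indexed by the `p`-element subsets
`S ⊆ {1, …, n}`, and the differential sends the basis vector `e_S` to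
`∑_{i ∈ S} (−1)^{#{j ∈ S : j < i}} fᵢ e_{S \ {i}}`.  `koszulD f p` is the differential
from degree `−(p+1)` to degree `−p`. -/
noncomputable def koszulD {R : Type*} [CommRing R] {n : ℕ} (f : Fin n → R) (p : ℕ) :
    ({S : Finset (Fin n) // S.card = p + 1} →₀ R) →ₗ[R]
      ({S : Finset (Fin n) // S.card = p} →₀ R) :=
  Finsupp.lsum R fun S => LinearMap.toSpanSingleton R _
    (∑ i ∈ S.1.attach,
      ((-1 : R) ^ (S.1.filter (fun j => j < i.1)).card * f i.1) •
        Finsupp.single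
          ⟨S.1.erase i.1, by rw [Finset.card_erase_of_mem i.2, S.2]; omega⟩ (1 : R))

namespace KAux

variable {R : Type*} [CommRing R] {n : ℕ}

abbrev B (n p : ℕ) := {S : Finset (Fin n) // S.card = p}
abbrev M (R : Type*) [CommRing R] (n p : ℕ) := B n p →₀ R

noncomputable def aux (R : Type*) [CommRing R] {n : ℕ} (p : ℕ) (T : Finset (Fin n)) (i : Fin n) :
    M R n p :=
  if h : (T.erase i).card = p then Finsupp.single ⟨T.erase i, h⟩ 1 else 0

lemma koszulD_single (f : Fin n → R) (p : ℕ) (S : B n (p + 1)) (r : R) :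
    koszulD f p (Finsupp.single S r)
      = r • ∑ i ∈ S.1,
          ((-1 : R) ^ (S.1.filter (fun j => j < i)).card * f i) • aux R p S.1 i := by
  rw [koszulD, Finsupp.lsum_single, LinearMap.toSpanSingleton_apply]
  congr 1
  rw [← Finset.sum_attach S.1 (fun i =>
    ((-1 : R) ^ (S.1.filter (fun j => j < i)).card * f i) • aux R p S.1 i)]
  refine Finset.sum_congr rfl fun i _ => ?_
  rw [aux, dif_pos (by rw [Finset.card_erase_of_mem i.2, S.2]; rfl)]

lemma last_not_mem_map (S : Finset (Fin n)) : Fin.last n ∉ S.map Fin.castSuccEmb := by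
  simp only [Finset.mem_map, Fin.castSuccEmb]
  rintro ⟨j, -, hj⟩
  exact absurd hj (Fin.castSucc_lt_last j).ne

def eS (n p : ℕ) (S : B n p) : B (n + 1) p :=
  ⟨S.1.map Fin.castSuccEmb, by rw [Finset.card_map, S.2]⟩

def kS (n p : ℕ) (S : B n p) : B (n + 1) (p + 1) :=
  ⟨insert (Fin.last n) (S.1.map Fin.castSuccEmb), by
    rw [Finset.card_insert_of_notMem (last_not_mem_map S.1), Finset.card_map, S.2]⟩

noncomputable def iota (R : Type*) [CommRing R] (n p : ℕ) : M R n p →ₗ[R] M R (n + 1) p :=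
  Finsupp.lmapDomain R R (eS n p)

noncomputable def kappa (R : Type*) [CommRing R] (n p : ℕ) :
    M R n p →ₗ[R] M R (n + 1) (p + 1) :=
  Finsupp.lmapDomain R R (kS n p)

lemma iota_single (p : ℕ) (S : B n p) (r : R) :
    iota R n p (Finsupp.single S r) = Finsupp.single (eS n p S) r := by
  simp [iota, Finsupp.mapDomain_single]

lemma kappa_single (p : ℕ) (S : B n p) (r : R) :
    kappa R n p (Finsupp.single S r) = Finsupp.single (kS n p S) r := by
  simp [kappa, Finsupp.mapDomain_single]

-- combinatorial lemmas
lemma map_erase' (S : Finset (Fin n)) (i : Fin n) :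
    (S.map Fin.castSuccEmb).erase (Fin.castSucc i) = (S.erase i).map Fin.castSuccEmb := by
  rw [Finset.map_erase]
  rfl

lemma filt_map (S : Finset (Fin n)) (i : Fin n) :
    ((S.map Fin.castSuccEmb).filter (fun j => j < Fin.castSucc i)).card
      = (S.filter (fun j => j < i)).card := by
  rw [Finset.filter_map, Finset.card_map]
  refine congrArg Finset.card (Finset.filter_congr fun j _ => ?_)
  show j.castSucc < i.castSucc ↔ j < i
  exact Fin.castSucc_lt_castSucc_iff

lemma filt_insert (S : Finset (Fin n)) (i : Fin n) :
    ((insert (Fin.last n) (S.map Fin.castSuccEmb)).filter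
        (fun j => j < Fin.castSucc i)).card
      = (S.filter (fun j => j < i)).card := by
  rw [Finset.filter_insert, if_neg (by exact fun h => absurd ((Fin.castSucc_lt_last i).trans h) (lt_irrefl _)), filt_map]

lemma filt_insert_last (S : Finset (Fin n)) :
    ((insert (Fin.last n) (S.map Fin.castSuccEmb)).filter
        (fun j => j < Fin.last n)).card = S.card := by
  rw [Finset.filter_insert, if_neg (lt_irrefl _), Finset.filter_true_of_mem, Finset.card_map]
  intro x hx
  rcases Finset.mem_map.mp hx with ⟨j, -, rfl⟩
  exact Fin.castSucc_lt_last j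

lemma aux_map (p : ℕ) (S : Finset (Fin n)) (i : Fin n) :
    aux R p (S.map Fin.castSuccEmb) (Fin.castSucc i) = iota R n p (aux R p S i) := by
  have he := map_erase' S i
  rw [aux, aux]
  by_cases h : (S.erase i).card = p
  · rw [dif_pos h, dif_pos (by rw [he, Finset.card_map]; exact h), iota_single]
    congr 1
    exact Subtype.ext he
  · rw [dif_neg h, dif_neg (by rw [he, Finset.card_map]; exact h), map_zero]

lemma aux_insert (p : ℕ) (S : Finset (Fin n)) (i : Fin n) :
    aux R (p + 1) (insert (Fin.last n) (S.map Fin.castSuccEmb)) (Fin.castSucc i)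
      = kappa R n p (aux R p S i) := by
  have he : (insert (Fin.last n) (S.map Fin.castSuccEmb)).erase (Fin.castSucc i)
      = insert (Fin.last n) ((S.erase i).map Fin.castSuccEmb) := by
    rw [Finset.erase_insert_of_ne (Fin.castSucc_lt_last i).ne', map_erase']
  have hc : (insert (Fin.last n) ((S.erase i).map Fin.castSuccEmb)).card
      = (S.erase i).card + 1 := by
    rw [Finset.card_insert_of_notMem (last_not_mem_map _), Finset.card_map]
  rw [aux, aux]
  by_cases h : (S.erase i).card = p
  · rw [dif_pos h, dif_pos (by rw [he, hc, h]), kappa_single]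
    congr 1
    exact Subtype.ext he
  · rw [dif_neg h, dif_neg (by rw [he, hc]; omega), map_zero]

lemma aux_insert_last (p : ℕ) (S : Finset (Fin n)) (hS : S.card = p + 1) :
    aux R (p + 1) (insert (Fin.last n) (S.map Fin.castSuccEmb)) (Fin.last n)
      = iota R n (p + 1) (Finsupp.single ⟨S, hS⟩ 1) := by
  have he : (insert (Fin.last n) (S.map Fin.castSuccEmb)).erase (Fin.last n)
      = S.map Fin.castSuccEmb := Finset.erase_insert (last_not_mem_map S)
  rw [aux, dif_pos (by rw [he, Finset.card_map, hS]), iota_single]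
  congr 1
  exact Subtype.ext he


lemma dA (f : Fin (n + 1) → R) (p : ℕ) :
    (koszulD f p).comp (iota R n (p + 1))
      = (iota R n p).comp (koszulD (fun i => f i.castSucc) p) := by
  apply Finsupp.lhom_ext'
  intro S
  apply LinearMap.ext_ring
  simp only [LinearMap.comp_apply, Finsupp.lsingle_apply]
  rw [iota_single, koszulD_single, koszulD_single, one_smul, one_smul, map_sum]
  show ∑ i ∈ S.1.map Fin.castSuccEmb, _ = _
  rw [Finset.sum_map]
  refine Finset.sum_congr rfl fun i _ => ?_
  rw [map_smul]
  show ((-1 : R) ^ ((S.1.map Fin.castSuccEmb).filter (fun j => j < i.castSucc)).card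
      * f i.castSucc) • aux R p (S.1.map Fin.castSuccEmb) i.castSucc = _
  rw [filt_map, aux_map]

lemma dB (f : Fin (n + 1) → R) (p : ℕ) :
    (koszulD f (p + 1)).comp (kappa R n (p + 1))
      = (kappa R n p).comp (koszulD (fun i => f i.castSucc) p)
        + ((-1 : R) ^ (p + 1) * f (Fin.last n)) • iota R n (p + 1) := by
  apply Finsupp.lhom_ext'
  intro S
  apply LinearMap.ext_ring
  simp only [LinearMap.comp_apply, LinearMap.add_apply, LinearMap.smul_apply,
    Finsupp.lsingle_apply]
  rw [kappa_single, koszulD_single, koszulD_single, one_smul, one_smul, map_sum]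
  show ∑ i ∈ insert (Fin.last n) (S.1.map Fin.castSuccEmb), _ = _
  rw [Finset.sum_insert (last_not_mem_map S.1)]
  conv_lhs => rw [add_comm]
  congr 1
  · show ∑ i ∈ S.1.map Fin.castSuccEmb, _ = _
    rw [Finset.sum_map]
    refine Finset.sum_congr rfl fun i _ => ?_
    rw [map_smul]
    show ((-1 : R) ^ ((insert (Fin.last n) (S.1.map Fin.castSuccEmb)).filter
        (fun j => j < i.castSucc)).card * f i.castSucc) •
          aux R (p + 1) (insert (Fin.last n) (S.1.map Fin.castSuccEmb)) i.castSucc = _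
    rw [filt_insert, aux_insert]
  · show ((-1 : R) ^ ((insert (Fin.last n) (S.1.map Fin.castSuccEmb)).filter
        (fun j => j < Fin.last n)).card * f (Fin.last n)) •
          aux R (p + 1) (insert (Fin.last n) (S.1.map Fin.castSuccEmb)) (Fin.last n) = _
    rw [filt_insert_last, S.2, aux_insert_last (p := p) S.1 S.2, iota_single]

lemma dB0 (f : Fin (n + 1) → R) :
    (koszulD f 0).comp (kappa R n 0) = f (Fin.last n) • iota R n 0 := by
  apply Finsupp.lhom_ext'
  intro S
  apply LinearMap.ext_ring
  have hS : S.1 = ∅ := Finset.card_eq_zero.mp S.2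
  simp only [LinearMap.comp_apply, LinearMap.smul_apply, Finsupp.lsingle_apply]
  rw [kappa_single, koszulD_single, one_smul, iota_single]
  have h1 : (kS n 0 S).1 = {Fin.last n} := by
    show insert (Fin.last n) (S.1.map Fin.castSuccEmb) = {Fin.last n}
    rw [hS, Finset.map_empty]
    rfl
  rw [h1, Finset.sum_singleton, Finset.filter_singleton, if_neg (lt_irrefl _), Finset.card_empty,
    pow_zero, one_mul, aux, dif_pos (by simp)]
  rw [Finsupp.smul_single, smul_eq_mul, mul_one, Finsupp.smul_single, smul_eq_mul, mul_one]
  congr 1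
  apply Subtype.ext
  show ({Fin.last n} : Finset (Fin (n + 1))).erase (Fin.last n) = S.1.map Fin.castSuccEmb
  simp [hS]

lemma eS_injective (n p : ℕ) : Function.Injective (eS n p) := fun S T h => by
  apply Subtype.ext
  exact Finset.map_injective Fin.castSuccEmb (congrArg Subtype.val h)

lemma kS_injective (n p : ℕ) : Function.Injective (kS n p) := fun S T h => by
  apply Subtype.ext
  apply Finset.map_injective Fin.castSuccEmb
  have h' := congrArg (fun (U : B (n + 1) (p + 1)) => U.1.erase (Fin.last n)) h
  simpa only [kS, Finset.erase_insert (last_not_mem_map S.1),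
    Finset.erase_insert (last_not_mem_map T.1)] using h'

lemma iota_injective (p : ℕ) : Function.Injective (iota R n p) := by
  intro u v h
  exact Finsupp.mapDomain_injective (eS_injective n p) h

lemma iota_apply_e (p : ℕ) (a : M R n p) (S : B n p) :
    iota R n p a (eS n p S) = a S :=
  Finsupp.mapDomain_apply (eS_injective n p) a S

lemma kappa_apply_k (p : ℕ) (b : M R n p) (S : B n p) :
    kappa R n p b (kS n p S) = b S :=
  Finsupp.mapDomain_apply (kS_injective n p) b S

lemma kappa_apply_e (p : ℕ) (b : M R n p) (S : B n (p + 1)) :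
    kappa R n p b (eS n (p + 1) S) = 0 := by
  refine Finsupp.mapDomain_notin_range _ _ ?_
  rintro ⟨T, hT⟩
  have : Fin.last n ∈ (eS n (p + 1) S).1 := by
    rw [← hT]; exact Finset.mem_insert_self _ _
  exact last_not_mem_map S.1 this

lemma iota_apply_k (p : ℕ) (a : M R n (p + 1)) (S : B n p) :
    iota R n (p + 1) a (kS n p S) = 0 := by
  refine Finsupp.mapDomain_notin_range _ _ ?_
  rintro ⟨T, hT⟩
  have : Fin.last n ∈ (eS n (p + 1) T).1 := by
    rw [hT]; exact Finset.mem_insert_self _ _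
  exact last_not_mem_map T.1 this

lemma pair_eq_zero {p : ℕ} {a : M R n (p + 1)} {b : M R n p}
    (h : iota R n (p + 1) a + kappa R n p b = 0) : a = 0 ∧ b = 0 := by
  constructor
  · ext S
    have := DFunLike.congr_fun h (eS n (p + 1) S)
    simpa [iota_apply_e, kappa_apply_e] using this
  · ext S
    have := DFunLike.congr_fun h (kS n p S)
    simpa [kappa_apply_k, iota_apply_k] using this

lemma exists_preimage (T : Finset (Fin (n + 1))) (hT : Fin.last n ∉ T) :
    ∃ S : Finset (Fin n), S.map Fin.castSuccEmb = T := by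
  refine ⟨Finset.univ.filter (fun j => j.castSucc ∈ T), ?_⟩
  ext i
  simp only [Finset.mem_map, Finset.mem_filter, Finset.mem_univ, true_and, Fin.castSuccEmb,
    Function.Embedding.coeFn_mk]
  constructor
  · rintro ⟨j, hj, rfl⟩; exact hj
  · intro hi
    rcases Fin.exists_castSucc_eq.mpr (fun h => hT (h ▸ hi)) with ⟨j, rfl⟩
    exact ⟨j, hi, rfl⟩

lemma exists_decomp (p : ℕ) (z : M R (n + 1) (p + 1)) :
    ∃ (a : M R n (p + 1)) (b : M R n p),
      z = iota R n (p + 1) a + kappa R n p b := by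
  induction z using Finsupp.induction with
  | zero => exact ⟨0, 0, by simp⟩
  | single_add T r z _ _ ih =>
    obtain ⟨a, b, rfl⟩ := ih
    by_cases hlast : Fin.last n ∈ T.1
    · obtain ⟨S, hS⟩ := exists_preimage (T.1.erase (Fin.last n)) (Finset.notMem_erase _ _)
      have hcard : S.card = p := by
        have := congrArg Finset.card hS
        rwa [Finset.card_map, Finset.card_erase_of_mem hlast, T.2] at this
      refine ⟨a, Finsupp.single ⟨S, hcard⟩ r + b, ?_⟩
      have hk : kS n p ⟨S, hcard⟩ = T := by
        apply Subtype.ext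
        show insert (Fin.last n) (S.map Fin.castSuccEmb) = T.1
        rw [hS, Finset.insert_erase hlast]
      rw [map_add, kappa_single, hk]
      abel
    · obtain ⟨S, hS⟩ := exists_preimage T.1 hlast
      have hcard : S.card = p + 1 := by
        have := congrArg Finset.card hS
        rwa [Finset.card_map, T.2] at this
      refine ⟨Finsupp.single ⟨S, hcard⟩ r + a, b, ?_⟩
      have he : eS n (p + 1) ⟨S, hcard⟩ = T := Subtype.ext hS
      rw [map_add, iota_single, he]
      abel

/-! ### The augmentation -/

noncomputable def eps (R : Type*) [CommRing R] (n : ℕ) : M R n 0 →ₗ[R] R :=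
  Finsupp.lapply (⟨∅, Finset.card_empty⟩ : B n 0)

lemma card_zero_eq (S T : B n 0) : S = T :=
  Subtype.ext (by rw [Finset.card_eq_zero.mp S.2, Finset.card_eq_zero.mp T.2])

lemma eps_bijective : Function.Bijective (eps R n) := by
  constructor
  · intro u v h
    ext S
    rw [card_zero_eq S ⟨∅, Finset.card_empty⟩]
    exact h
  · intro r
    exact ⟨Finsupp.single ⟨∅, Finset.card_empty⟩ r, by simp [eps]⟩

lemma eps_d_single (f : Fin n → R) (i : Fin n) (h : ({i} : Finset (Fin n)).card = 1) (r : R) :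
    eps R n (koszulD f 0 (Finsupp.single ⟨{i}, h⟩ r)) = r * f i := by
  rw [koszulD_single]
  show eps R n (r • ∑ j ∈ ({i} : Finset (Fin n)), _) = _
  rw [Finset.sum_singleton, Finset.filter_singleton, if_neg (lt_irrefl _), Finset.card_empty,
    pow_zero, one_mul, aux, dif_pos (by simp)]
  simp [eps, mul_comm]

lemma range_eps_comp (f : Fin n → R) :
    LinearMap.range ((eps R n).comp (koszulD f 0)) = Ideal.span (Set.range f) := by
  apply le_antisymm
  · rintro _ ⟨z, rfl⟩
    rw [LinearMap.comp_apply]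
    induction z using Finsupp.induction_linear with
    | zero => simp
    | add u v hu hv => rw [map_add, map_add]; exact add_mem hu hv
    | single S r =>
      obtain ⟨i, hi⟩ := Finset.card_eq_one.mp S.2
      have hS : S = ⟨{i}, by rw [← hi]; exact S.2⟩ := Subtype.ext hi
      rw [hS, eps_d_single]
      exact Ideal.mul_mem_left _ r (Ideal.subset_span ⟨i, rfl⟩)
  · rw [Ideal.span_le]
    rintro _ ⟨i, rfl⟩
    refine ⟨Finsupp.single ⟨{i}, Finset.card_singleton i⟩ 1, ?_⟩
    rw [LinearMap.comp_apply, eps_d_single, one_mul]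

end KAux
namespace KAux

variable {R : Type*} [CommRing R]


lemma dA' {n : ℕ} (f : Fin (n + 1) → R) (p : ℕ) (a : M R n (p + 1)) :
    koszulD f p (iota R n (p + 1) a)
      = iota R n p (koszulD (fun i => f i.castSucc) p a) :=
  DFunLike.congr_fun (dA f p) a

lemma dB' {n : ℕ} (f : Fin (n + 1) → R) (p : ℕ) (b : M R n (p + 1)) :
    koszulD f (p + 1) (kappa R n (p + 1) b)
      = kappa R n p (koszulD (fun i => f i.castSucc) p b)
        + ((-1 : R) ^ (p + 1) * f (Fin.last n)) • iota R n (p + 1) b :=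
  DFunLike.congr_fun (dB f p) b

lemma dB0' {n : ℕ} (f : Fin (n + 1) → R) (b : M R n 0) :
    koszulD f 0 (kappa R n 0 b) = f (Fin.last n) • iota R n 0 b :=
  DFunLike.congr_fun (dB0 f) b

theorem master :
    ∀ (n : ℕ) (f : Fin n → R),
      RingTheory.Sequence.IsWeaklyRegular R (List.ofFn f) →
      ∀ p : ℕ, LinearMap.ker (koszulD f p) = LinearMap.range (koszulD f (p + 1)) := by
  intro n
  induction n with
  | zero =>
    intro f _ p
    have hempty : IsEmpty (B 0 (p + 1)) := ⟨fun S => by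
      have h1 := S.2
      have h2 : S.1 = ∅ := Finset.eq_empty_of_forall_notMem (fun x _ => x.elim0)
      rw [h2] at h1
      simp at h1⟩
    apply le_antisymm
    · intro z _
      refine ⟨0, ?_⟩
      rw [map_zero]
      exact (Subsingleton.elim _ _)
    · intro z _
      rw [LinearMap.mem_ker, Subsingleton.elim z 0, map_zero]
  | succ n ih =>
    intro f hw p
    have hsplit : List.ofFn f
        = List.ofFn (fun i => f i.castSucc) ++ [f (Fin.last n)] := by
      rw [List.ofFn_succ', List.concat_eq_append]
    set g : Fin n → R := fun i => f i.castSucc with hgdef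
    set x : R := f (Fin.last n) with hxdef
    rw [hsplit, RingTheory.Sequence.isWeaklyRegular_append_iff] at hw
    obtain ⟨hwg, hwx⟩ := hw
    have IH := ih g hwg
    have ddg : ∀ (q : ℕ) (w : M R n (q + 2)), koszulD g q (koszulD g (q + 1) w) = 0 := by
      intro q w
      have hmem : koszulD g (q + 1) w ∈ LinearMap.range (koszulD g (q + 1)) := ⟨w, rfl⟩
      rw [← IH q] at hmem
      exact hmem
    have hsm : (Ideal.ofList (List.ofFn g) • ⊤ : Submodule R R)
        = Ideal.span (Set.range g) := by
      rw [smul_eq_mul, Ideal.mul_top]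
      show Ideal.span {r | r ∈ List.ofFn g} = Ideal.span (Set.range g)
      congr 1
      ext r
      exact List.mem_ofFn
    have hxreg : IsSMulRegular (R ⧸ (Ideal.ofList (List.ofFn g) • ⊤ : Submodule R R)) x :=
      (RingTheory.Sequence.isWeaklyRegular_singleton_iff _ _).mp hwx
    have hx : ∀ β : R, x * β ∈ Ideal.span (Set.range g) → β ∈ Ideal.span (Set.range g) := by
      intro β hβ
      set I : Submodule R R := Ideal.ofList (List.ofFn g) • ⊤ with hI
      have h0 : (Submodule.Quotient.mk (x * β) : R ⧸ I) = 0 := by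
        rw [Submodule.Quotient.mk_eq_zero, hsm]; exact hβ
      have h1 : x • (Submodule.Quotient.mk β : R ⧸ I) = x • (0 : R ⧸ I) := by
        rw [smul_zero, ← Submodule.Quotient.mk_smul, smul_eq_mul]
        exact h0
      have h2 := hxreg h1
      rw [← hsm]
      exact (Submodule.Quotient.mk_eq_zero _).mp h2
    apply le_antisymm
    · -- ker ≤ range
      intro z hz
      obtain ⟨a, b, rfl⟩ := exists_decomp p z
      rw [LinearMap.mem_ker, map_add] at hz
      cases p with
      | zero =>
        rw [dA' f 0 a, dB0' f b] at hz
        have h4 : koszulD g 0 a + x • b = 0 := by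
          apply iota_injective 0
          rw [map_add, map_smul, map_zero]
          exact hz
        have h5 : x * eps R n b ∈ Ideal.span (Set.range g) := by
          have heq : eps R n (koszulD g 0 a) = -(x * eps R n b) := by
            have := congrArg (eps R n) h4
            rw [map_add, map_smul, smul_eq_mul, map_zero] at this
            linear_combination this
          have hmem : eps R n (koszulD g 0 a) ∈ Ideal.span (Set.range g) := by
            rw [← range_eps_comp g]; exact ⟨a, rfl⟩
          rw [heq] at hmem
          exact neg_mem_iff.mp hmem
        obtain ⟨c, hc⟩ := (range_eps_comp g) ▸ hx _ h5
        have hcb : koszulD g 0 c = b := by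
          apply (eps_bijective (R := R) (n := n)).1
          exact hc
        have hker : koszulD g 0 (a + x • c) = 0 := by
          rw [map_add, map_smul, hcb, h4]
        have hmem : a + x • c ∈ LinearMap.range (koszulD g 1) := by
          rw [← IH 0]; exact hker
        obtain ⟨e, he⟩ := hmem
        refine ⟨kappa R n 1 c + iota R n 2 e, ?_⟩
        rw [map_add, dB' f 0 c, dA' f 1 e, he, hcb]
        rw [map_add, map_smul]
        module
      | succ q =>
        rw [dA' f (q + 1) a, dB' f q b] at hz
        have hz' : iota R n (q + 1) (koszulD g (q + 1) a + ((-1 : R) ^ (q + 1) * x) • b)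
            + kappa R n q (koszulD g q b) = 0 := by
          rw [map_add, map_smul]
          rw [← hz]
          module
        obtain ⟨hzab, hzb⟩ := pair_eq_zero hz'
        have hmem : b ∈ LinearMap.range (koszulD g (q + 1)) := by
          rw [← IH q]; exact hzb
        obtain ⟨c, hc⟩ := hmem
        have hker : koszulD g (q + 1) (a + ((-1 : R) ^ (q + 1) * x) • c) = 0 := by
          rw [map_add, map_smul, hc]
          exact hzab
        have hmem2 : a + ((-1 : R) ^ (q + 1) * x) • c
            ∈ LinearMap.range (koszulD g (q + 2)) := by
          rw [← IH (q + 1)]; exact hker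
        obtain ⟨e, he⟩ := hmem2
        refine ⟨kappa R n (q + 2) c + iota R n (q + 3) e, ?_⟩
        rw [map_add, dB' f (q + 1) c, dA' f (q + 2) e,
          he, hc]
        rw [map_add, map_smul]
        have hsign : ((-1 : R) ^ (q + 2) * x) = -(((-1 : R) ^ (q + 1) * x)) := by ring
        rw [hsign]
        module
    · -- range ≤ ker
      rintro _ ⟨z, rfl⟩
      rw [LinearMap.mem_ker]
      obtain ⟨a, b, rfl⟩ := exists_decomp (p + 1) z
      rw [map_add, map_add]
      rw [dA' f (p + 1) a]
      rw [dA' f p (koszulD g (p + 1) a), ddg, map_zero, zero_add]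
      cases p with
      | zero =>
        rw [dB' f 0 b, map_add, map_smul,
          dB0' f (koszulD g 0 b), dA' f 0 b]
        module
      | succ q =>
        rw [dB' f (q + 1) b, map_add, map_smul,
          dB' f q (koszulD g (q + 1) b), ddg, map_zero, zero_add,
          dA' f (q + 1) b]
        have hsign : ((-1 : R) ^ (q + 2) * x) = -(((-1 : R) ^ (q + 1) * x)) := by ring
        rw [hsign]
        module

end KAux

/-- Let `f₁, …, fₙ` be a regular sequence in a commutative ring `R`. Then the Koszul
complex `K_R(f₁, …, fₙ)` is exact in negative degrees, and its zeroth cohomology is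
`R/(f₁, …, fₙ)` (the degree-`0` term is identified with `R` by the bijective evaluation
map at the empty subset, under which the image of the last differential is exactly the
ideal `(f₁, …, fₙ)`). -/

theorem stmt6 {R : Type*} [CommRing R] {n : ℕ} (f : Fin n → R)
    (hreg : RingTheory.Sequence.IsRegular R (List.ofFn f)) :
    (∀ p : ℕ, LinearMap.ker (koszulD f p) = LinearMap.range (koszulD f (p + 1))) ∧
    Function.Bijective
      (Finsupp.lapply (⟨∅, Finset.card_empty⟩ : {S : Finset (Fin n) // S.card = 0}) :
        ({S : Finset (Fin n) // S.card = 0} →₀ R) →ₗ[R] R) ∧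
    LinearMap.range
        ((Finsupp.lapply (⟨∅, Finset.card_empty⟩ : {S : Finset (Fin n) // S.card = 0}) :
          ({S : Finset (Fin n) // S.card = 0} →₀ R) →ₗ[R] R).comp (koszulD f 0))
      = (Ideal.span (Set.range f) : Submodule R R) := by
  exact ⟨KAux.master n f hreg.toIsWeaklyRegular, KAux.eps_bijective, KAux.range_eps_comp f⟩
end

section
/- With notation as in the Smith normal form statement over k[[t]]: define the Jantzen filtration V₀ ⊇ V₁ ⊇ V₂ ⊇ … of V₀ = V/tV by letting V_m be the set of v₀ ∈ V₀ admitting a lift v ∈ V with B(v) ∈ t^m W. Then the order of vanishing of det B at t = 0 equals Σ_{j≥1} dim_k V_j. -/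
open PowerSeries

variable {k : Type*} [Field k] {V W : Type*}
  [AddCommGroup V] [Module (PowerSeries k) V]
  [AddCommGroup W] [Module (PowerSeries k) W]

/-- The **Jantzen filtration** `V₀ ⊇ V₁ ⊇ V₂ ⊇ …` of `V₀ = V/tV` attached to a
`k[[t]]`-linear map `B : V → W`: `V_m` is the set of `v₀ ∈ V₀` admitting a lift `v ∈ V`
with `B v ∈ t^m W`. -/
noncomputable def jantzenFiltration (B : V →ₗ[PowerSeries k] W) (m : ℕ) :
    Submodule (PowerSeries k)
      (V ⧸ (Ideal.span {(PowerSeries.X : PowerSeries k)} •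
        (⊤ : Submodule (PowerSeries k) V))) :=
  Submodule.map
    (Submodule.mkQ (Ideal.span {(PowerSeries.X : PowerSeries k)} •
      (⊤ : Submodule (PowerSeries k) V)))
    (Submodule.comap B
      (Ideal.span {(PowerSeries.X : PowerSeries k) ^ m} • (⊤ : Submodule (PowerSeries k) W)))

open Pointwise in
private lemma mem_span_singleton_smul_top_iff {R M : Type*} [CommRing R] [AddCommGroup M]
    [Module R M] (r : R) (x : M) :
    x ∈ Ideal.span {r} • (⊤ : Submodule R M) ↔ ∃ w, r • w = x := by
  rw [Submodule.ideal_span_singleton_smul]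
  constructor
  · intro h
    rw [← SetLike.mem_coe, Submodule.coe_pointwise_smul] at h
    obtain ⟨w, -, hw⟩ := Set.mem_smul_set.mp h
    exact ⟨w, hw⟩
  · rintro ⟨w, rfl⟩
    exact Submodule.smul_mem_pointwise_smul w r ⊤ trivial

private lemma order_prod_eq_sum {ι : Type*} (s : Finset ι) (f : ι → PowerSeries k) :
    (∏ i ∈ s, f i).order = ∑ i ∈ s, (f i).order := by
  classical
  induction s using Finset.induction_on with
  | empty => simp
  | insert _ _ h ih => rw [Finset.prod_insert h, Finset.sum_insert h, order_mul, ih]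

private lemma smul_quot_mk (f : PowerSeries k) (x : V) :
    f • (Submodule.mkQ (Ideal.span {(PowerSeries.X : PowerSeries k)} •
        (⊤ : Submodule (PowerSeries k) V)) x)
      = (C (constantCoeff f)) • (Submodule.mkQ (Ideal.span {(PowerSeries.X : PowerSeries k)} •
        (⊤ : Submodule (PowerSeries k) V)) x) := by
  set tV : Submodule (PowerSeries k) V :=
    Ideal.span {(PowerSeries.X : PowerSeries k)} • (⊤ : Submodule (PowerSeries k) V) with htV
  have hdvd : (X : PowerSeries k) ∣ (f - C (constantCoeff f)) := by
    rw [X_dvd_iff]; simp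
  obtain ⟨g, hg⟩ := hdvd
  have hz : (f - C (constantCoeff f)) • (tV.mkQ x) = 0 := by
    rw [← map_smul, Submodule.mkQ_apply, Submodule.Quotient.mk_eq_zero, hg, mul_smul]
    exact (mem_span_singleton_smul_top_iff X _).mpr ⟨g • x, rfl⟩
  have hsub := sub_smul f (C (constantCoeff f)) (tV.mkQ x)
  rw [hz] at hsub
  exact (sub_eq_zero.mp hsub.symm)

/-- **Jantzen sum formula** (abstract form).  Let `V, W` be free `k[[t]]`-modules of rank
`d` and `B : V → W` a `k[[t]]`-linear map with `det B ≠ 0`.  Then the Jantzen filtration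
`(V_j)` of `V₀ = V/tV` is eventually zero, and the order of vanishing of `det B` at
`t = 0` equals `Σ_{j ≥ 1} dim_k V_j`. -/
theorem stmt9 {d : ℕ} [Module k V] [IsScalarTower k (PowerSeries k) V]
    (bV : Module.Basis (Fin d) (PowerSeries k) V) (bW : Module.Basis (Fin d) (PowerSeries k) W)
    (B : V →ₗ[PowerSeries k] W)
    (hdet : (LinearMap.toMatrix bV bW B).det ≠ 0) :
    (∃ N : ℕ, jantzenFiltration B (N + 1) = ⊥) ∧
    ∀ N : ℕ, jantzenFiltration B (N + 1) = ⊥ →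
      (LinearMap.toMatrix bV bW B).det.order
        = (∑ j ∈ Finset.Icc 1 N, Module.finrank k (jantzenFiltration B j) : ℕ) := by
  classical
  set tV : Submodule (PowerSeries k) V :=
    Ideal.span {(PowerSeries.X : PowerSeries k)} • (⊤ : Submodule (PowerSeries k) V) with htV
  -- B is injective
  have hinj : Function.Injective B := by
    intro x y hxy
    have h0 : B (x - y) = 0 := by rw [map_sub, hxy, sub_self]
    have hmv : (LinearMap.toMatrix bV bW B).mulVec (bV.repr (x - y)) = 0 := by
      rw [LinearMap.toMatrix_mulVec_repr, h0, map_zero]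
      rfl
    have hc : (⇑(bV.repr (x - y)) : Fin d → PowerSeries k) = 0 :=
      Matrix.eq_zero_of_mulVec_eq_zero hdet hmv
    have h1 : bV.repr (x - y) = 0 := Finsupp.ext fun i => congrFun hc i
    have h2 : bV.repr (x - y) = bV.repr 0 := by rw [h1, map_zero]
    exact sub_eq_zero.mp (bV.repr.injective h2)
  -- Smith normal form for the range of B
  obtain ⟨n, bM, bN, f, a, hsnf⟩ := (LinearMap.range B).smithNormalForm bW
  set e : V ≃ₗ[PowerSeries k] LinearMap.range B := LinearEquiv.ofInjective B hinj with he
  have hnd : n = d := by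
    have h1 := Module.finrank_eq_card_basis bN
    have h2 := Module.finrank_eq_card_basis bV
    have h3 := e.finrank_eq
    simp only [Fintype.card_fin] at h1 h2
    omega
  subst hnd
  have hbij : Function.Bijective f :=
    (Fintype.bijective_iff_injective_and_card f).mpr ⟨f.injective, rfl⟩
  set g : Fin n ≃ Fin n := Equiv.ofBijective f hbij with hg
  set eV : Module.Basis (Fin n) (PowerSeries k) V := bN.map e.symm with heV
  set fW : Module.Basis (Fin n) (PowerSeries k) W := bM.reindex g.symm with hfW
  have hBe : ∀ i, B (eV i) = a i • fW i := by
    intro i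
    have h1 : B (eV i) = ((bN i : LinearMap.range B) : W) := by
      rw [heV, Module.Basis.map_apply]
      have h2 : ((LinearEquiv.ofInjective B hinj (e.symm (bN i)) : LinearMap.range B) : W)
          = B (e.symm (bN i)) := LinearEquiv.ofInjective_apply B (e.symm (bN i))
      rw [← he, e.apply_symm_apply] at h2
      exact h2.symm
    rw [h1, hsnf i]
    congr 1
    rw [hfW, Module.Basis.reindex_apply, Equiv.symm_symm]
    rfl
  have ha : ∀ i, a i ≠ 0 := by
    intro i hai
    apply bN.ne_zero i
    have h1 : ((bN i : LinearMap.range B) : W) = 0 := by rw [hsnf i, hai, zero_smul]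
    exact Subtype.ext h1
  -- orders of the diagonal entries
  set ord : Fin n → ℕ := fun i => (a i).order.lift (order_finite_iff_ne_zero.mpr (ha i))
    with hordd
  set u : Fin n → PowerSeries k := fun i => divXPowOrder (a i) with hudef
  have hunit : ∀ i, IsUnit (u i) := fun i => isUnit_divided_by_X_pow_order (ha i)
  have hau : ∀ i, a i = X ^ (ord i) * u i := fun i => by
    show a i = X ^ ((a i).order.lift (order_finite_iff_ne_zero.mpr (ha i))) * divXPowOrder (a i)
    rw [ENat.lift_eq_toNat_of_lt_top]; exact X_pow_order_mul_divXPowOrder.symm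
  have haord : ∀ i, (a i).order = (ord i : ℕ∞) := by
    intro i
    rw [hau i, order_mul, order_X_pow, order_zero_of_unit (hunit i), add_zero]
  -- the matrix of B in the bases eV, fW is diagonal
  have hDdiag : LinearMap.toMatrix eV fW B = Matrix.diagonal a := by
    ext i j
    rw [LinearMap.toMatrix_apply, hBe j, map_smul, Module.Basis.repr_self, Matrix.diagonal_apply]
    simp only [Finsupp.smul_single, smul_eq_mul, mul_one, Finsupp.single_apply]
    by_cases h : i = j
    · subst h; simp
    · simp [h, Ne.symm h]
  -- order of determinant
  have horder : (LinearMap.toMatrix bV bW B).det.order = ∑ i, ((ord i : ℕ∞)) := by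
    have hfact : LinearMap.toMatrix bV bW B =
        LinearMap.toMatrix fW bW LinearMap.id *
          (LinearMap.toMatrix eV fW B * LinearMap.toMatrix bV eV LinearMap.id) := by
      rw [← LinearMap.toMatrix_comp bV eV fW B LinearMap.id,
        ← LinearMap.toMatrix_comp bV fW bW LinearMap.id (B.comp LinearMap.id),
        LinearMap.comp_id, LinearMap.id_comp]
    have hA : IsUnit (LinearMap.toMatrix fW bW (LinearMap.id : W →ₗ[PowerSeries k] W)).det := by
      rw [LinearMap.toMatrix_id_eq_basis_toMatrix]
      have := bW.invertibleToMatrix fW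
      exact Matrix.isUnit_det_of_invertible _
    have hQ : IsUnit (LinearMap.toMatrix bV eV (LinearMap.id : V →ₗ[PowerSeries k] V)).det := by
      rw [LinearMap.toMatrix_id_eq_basis_toMatrix]
      have := eV.invertibleToMatrix bV
      exact Matrix.isUnit_det_of_invertible _
    rw [hfact, Matrix.det_mul, Matrix.det_mul, order_mul, order_mul,
      order_zero_of_unit hA, order_zero_of_unit hQ, add_zero, zero_add,
      hDdiag, Matrix.det_diagonal, order_prod_eq_sum]
    exact Finset.sum_congr rfl fun i _ => haord i
  -- constant coefficients of coordinates of elements of tV vanish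
  have hmain : ∀ (c : Fin n → PowerSeries k),
      (∑ i, c i • tV.mkQ (eV i)) = 0 → ∀ i, constantCoeff (c i) = 0 := by
    intro c hc i
    have h1 : tV.mkQ (∑ j, c j • eV j) = 0 := by
      rw [map_sum]
      simpa only [map_smul] using hc
    rw [Submodule.mkQ_apply, Submodule.Quotient.mk_eq_zero] at h1
    obtain ⟨w, hw⟩ := (mem_span_singleton_smul_top_iff _ _).mp h1
    have h2 : c i = X * eV.repr w i := by
      have h3 := congrArg (fun z => eV.repr z i) hw
      simp only [map_smul, Finsupp.smul_apply, smul_eq_mul] at h3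
      rw [eV.repr_sum_self] at h3
      exact h3.symm
    rw [h2, map_mul, constantCoeff_X, zero_mul]
  -- linear independence over k of the images of eV in V/tV
  have hli : LinearIndependent k (fun i => tV.mkQ (eV i)) := by
    rw [Fintype.linearIndependent_iff]
    intro gk hgk i
    have hCeq : ∀ (r : k), (C r : PowerSeries k) = algebraMap k (PowerSeries k) r := by
      intro r
      rw [PowerSeries.algebraMap_apply]
      simp
    have h1 : (∑ j, (C (gk j)) • tV.mkQ (eV j)) = 0 := by
      rw [← hgk]
      refine Finset.sum_congr rfl fun j _ => ?_
      rw [hCeq, algebraMap_smul]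
    have h2 := hmain _ h1 i
    rw [constantCoeff_C] at h2
    exact h2
  -- membership of the images in the Jantzen filtration
  have hmem : ∀ (m : ℕ) (i : Fin n), m ≤ ord i → tV.mkQ (eV i) ∈ jantzenFiltration B m := by
    intro m i him
    refine ⟨eV i, ?_, rfl⟩
    simp only [SetLike.mem_coe, Submodule.mem_comap]
    rw [hBe i]
    refine (mem_span_singleton_smul_top_iff _ _).mpr ⟨(X ^ (ord i - m) * u i) • fW i, ?_⟩
    rw [smul_smul, ← mul_assoc, ← pow_add, Nat.add_sub_cancel' him, ← hau i]
  -- decomposition of elements of the Jantzen filtration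
  have hsub : ∀ (m : ℕ), ∀ x ∈ jantzenFiltration B m,
      x ∈ Submodule.span k ((fun i => tV.mkQ (eV i)) '' {i | m ≤ ord i}) := by
    intro m x hx
    obtain ⟨v, hv, rfl⟩ := hx
    simp only [SetLike.mem_coe, Submodule.mem_comap] at hv
    obtain ⟨w, hw⟩ := (mem_span_singleton_smul_top_iff _ _).mp hv
    set c : Fin n → PowerSeries k := fun i => eV.repr v i with hcdef
    have hBv : B v = ∑ j, (c j * a j) • fW j := by
      conv_lhs => rw [← eV.sum_repr v]
      rw [map_sum]
      refine Finset.sum_congr rfl fun j _ => ?_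
      rw [map_smul, hBe j, smul_smul]
    have hdvd : ∀ j, (X : PowerSeries k) ^ m ∣ c j * a j := by
      intro j
      refine ⟨fW.repr w j, ?_⟩
      have h1 : fW.repr (B v) j = c j * a j := by
        rw [hBv, map_sum]
        rw [show (∑ i, fW.repr ((c i * a i) • fW i)) = fW.repr (∑ i, (c i * a i) • fW i) by
          rw [map_sum]]
        rw [fW.repr_sum_self]
      have h2 : fW.repr (B v) j = X ^ m * fW.repr w j := by
        rw [← hw, map_smul]
        rfl
      rw [← h1, h2]
    have hlow : ∀ j, ord j < m → constantCoeff (c j) = 0 := by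
      intro j hj
      obtain ⟨w', hw'⟩ := hdvd j
      rw [hau j] at hw'
      have hm : m = ord j + (m - ord j) := by omega
      rw [hm, pow_add, mul_assoc] at hw'
      have h4 : (X : PowerSeries k) ^ (ord j) * (c j * u j)
          = X ^ (ord j) * (X ^ (m - ord j) * w') := by
        rw [← hw']; ring
      have h5 := mul_left_cancel₀ (pow_ne_zero _ (X_ne_zero : (X : PowerSeries k) ≠ 0)) h4
      have h6 : (X : PowerSeries k) ∣ c j * u j := by
        rw [h5]
        exact dvd_mul_of_dvd_left (dvd_pow_self X (by omega)) w'
      rw [(hunit j).dvd_mul_right] at h6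
      rw [← X_dvd_iff]
      exact h6
    have hCeq : ∀ (r : k), (C r : PowerSeries k) = algebraMap k (PowerSeries k) r := by
      intro r
      rw [PowerSeries.algebraMap_apply]
      simp
    have hxsum : tV.mkQ v = ∑ j, (constantCoeff (c j)) • tV.mkQ (eV j) := by
      conv_lhs => rw [← eV.sum_repr v]
      rw [map_sum]
      refine Finset.sum_congr rfl fun j _ => ?_
      rw [map_smul, smul_quot_mk, hCeq, algebraMap_smul]
    rw [hxsum]
    refine Submodule.sum_mem _ fun j _ => ?_
    by_cases hj : m ≤ ord j
    · exact Submodule.smul_mem _ _ (Submodule.subset_span ⟨j, hj, rfl⟩)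
    · rw [hlow j (by omega), zero_smul]
      exact Submodule.zero_mem _
  -- span description of the Jantzen filtration as a k-submodule
  have hspan : ∀ m : ℕ, (jantzenFiltration B m).restrictScalars k
      = Submodule.span k ((fun i => tV.mkQ (eV i)) '' {i | m ≤ ord i}) := by
    intro m
    apply le_antisymm
    · intro x hx
      exact hsub m x hx
    · rw [Submodule.span_le]
      rintro _ ⟨i, hi, rfl⟩
      exact hmem m i hi
  -- dimension of the filtration steps
  have hdim : ∀ m : ℕ, Module.finrank k (jantzenFiltration B m)
      = (Finset.univ.filter fun i => m ≤ ord i).card := by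
    intro m
    have h2 : LinearIndependent k
        (fun j : {i : Fin n // m ≤ ord i} => tV.mkQ (eV (j : Fin n))) :=
      hli.comp _ Subtype.val_injective
    have h3 := finrank_span_eq_card h2
    have h4 : Set.range (fun j : {i : Fin n // m ≤ ord i} => tV.mkQ (eV (j : Fin n)))
        = (fun i => tV.mkQ (eV i)) '' {i | m ≤ ord i} := by
      ext y
      constructor
      · rintro ⟨⟨i, hi⟩, rfl⟩; exact ⟨i, hi, rfl⟩
      · rintro ⟨i, hi, rfl⟩; exact ⟨⟨i, hi⟩, rfl⟩
    rw [h4] at h3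
    rw [← hspan m] at h3
    rw [Fintype.card_subtype] at h3
    exact h3
  -- the filtration vanishes iff all orders are bounded
  have hbot_iff : ∀ Nn : ℕ, jantzenFiltration B (Nn + 1) = ⊥ ↔ ∀ i, ord i ≤ Nn := by
    intro Nn
    constructor
    · intro hb i
      by_contra hlt
      have h1 : tV.mkQ (eV i) ∈ jantzenFiltration B (Nn + 1) := hmem _ i (by omega)
      rw [hb, Submodule.mem_bot] at h1
      exact hli.ne_zero i h1
    · intro hN
      rw [← Submodule.restrictScalars_eq_bot_iff (S := k), hspan]
      have hempty : {i : Fin n | Nn + 1 ≤ ord i} = ∅ := by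
        ext i
        simp only [Set.mem_setOf_eq, Set.mem_empty_iff_false, iff_false, not_le]
        exact lt_of_le_of_lt (hN i) (Nat.lt_succ_self Nn)
      rw [hempty, Set.image_empty, Submodule.span_empty]
  refine ⟨⟨Finset.univ.sup ord, (hbot_iff _).mpr fun i => Finset.le_sup (Finset.mem_univ i)⟩, ?_⟩
  intro N hN
  have hordN : ∀ i, ord i ≤ N := (hbot_iff N).mp hN
  have hcount : ∑ j ∈ Finset.Icc 1 N, Module.finrank k (jantzenFiltration B j)
      = ∑ i, ord i := by
    calc ∑ j ∈ Finset.Icc 1 N, Module.finrank k (jantzenFiltration B j)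
        = ∑ j ∈ Finset.Icc 1 N, ∑ i : Fin n, if j ≤ ord i then 1 else 0 := by
          refine Finset.sum_congr rfl fun j _ => ?_
          rw [hdim j, Finset.card_filter]
      _ = ∑ i : Fin n, ∑ j ∈ Finset.Icc 1 N, if j ≤ ord i then 1 else 0 := Finset.sum_comm
      _ = ∑ i : Fin n, ord i := by
          refine Finset.sum_congr rfl fun i _ => ?_
          rw [← Finset.card_filter]
          have hfe : Finset.filter (fun j => j ≤ ord i) (Finset.Icc 1 N)
              = Finset.Icc 1 (ord i) := by
            ext j
            simp only [Finset.mem_filter, Finset.mem_Icc]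
            constructor
            · rintro ⟨⟨h1, h2⟩, h3⟩; exact ⟨h1, h3⟩
            · rintro ⟨h1, h3⟩; exact ⟨⟨h1, le_trans h3 (hordN i)⟩, h3⟩
          rw [hfe, Nat.card_Icc]
          omega
  rw [horder, hcount, Nat.cast_sum]
end

section
/- For the Lie algebra sl₂(ℂ) with standard basis e, f, h, the Verma module M_λ of highest weight λ ∈ ℂ is a simple module if and only if λ is not a nonnegative integer. -/
/-! The Verma module `M_λ` for `sl₂(ℂ)` in its concrete realization: underlying space
`ℕ →₀ ℂ` with basis `(fⁿv)_{n ≥ 0}`, where `f` acts by the shift `fⁿv ↦ f^{n+1}v`,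
`h · fⁿv = (λ − 2n) fⁿv` and `e · fⁿv = n(λ − n + 1) f^{n−1}v`. -/

/-- The action of `f` on `M_λ`. -/
noncomputable def vermaF : (ℕ →₀ ℂ) →ₗ[ℂ] (ℕ →₀ ℂ) :=
  Finsupp.lsum ℂ fun n => LinearMap.toSpanSingleton ℂ (ℕ →₀ ℂ) (Finsupp.single (n + 1) 1)

/-- The action of `e` on `M_λ`. -/
noncomputable def vermaE (lam : ℂ) : (ℕ →₀ ℂ) →ₗ[ℂ] (ℕ →₀ ℂ) :=
  Finsupp.lsum ℂ fun n => LinearMap.toSpanSingleton ℂ (ℕ →₀ ℂ)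
    (((n : ℂ) * (lam - n + 1)) • Finsupp.single (n - 1) 1)

/-- The action of `h` on `M_λ`. -/
noncomputable def vermaH (lam : ℂ) : (ℕ →₀ ℂ) →ₗ[ℂ] (ℕ →₀ ℂ) :=
  Finsupp.lsum ℂ fun n => LinearMap.toSpanSingleton ℂ (ℕ →₀ ℂ)
    ((lam - 2 * n) • Finsupp.single n 1)

/-- A subspace of `M_λ` invariant under the `sl₂`-action. -/
def sl2Invariant (lam : ℂ) (N : Submodule ℂ (ℕ →₀ ℂ)) : Prop :=
  ∀ x ∈ N, vermaE lam x ∈ N ∧ vermaF x ∈ N ∧ vermaH lam x ∈ N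

/-! If `λ = m ∈ ℕ`, the vectors with no component on `v, fv, …, fᵐv` form a proper nonzero
invariant subspace: `f` raises and `h` preserves the index, and the only way `e` could leave it is
through `e · f^{m+1}v = (m+1)(λ − m) fᵐv`, which vanishes. If `λ ∉ ℕ`, the coefficient
`(k+1)(λ − k)` never vanishes, so applying `e` to a nonzero `x` of top index `n` exactly `n` times
gives a nonzero multiple of `v`; since `v` generates `M_λ` under `f`, every nonzero invariant
subspace is everything. -/

open Finsupp

theorem vermaF_single (n : ℕ) (c : ℂ) : vermaF (single n c) = single (n + 1) c := by
  simp [vermaF]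

theorem vermaF_apply_zero (x : ℕ →₀ ℂ) : vermaF x 0 = 0 := by
  induction x using Finsupp.induction_linear with
  | zero => simp
  | add x y hx hy => simp [hx, hy]
  | single n c => simp [vermaF_single]

theorem vermaF_apply_succ (x : ℕ →₀ ℂ) (k : ℕ) : vermaF x (k + 1) = x k := by
  induction x using Finsupp.induction_linear with
  | zero => simp
  | add x y hx hy => simp [hx, hy]
  | single n c => simp [vermaF_single, single_apply]

theorem vermaH_apply (lam : ℂ) (x : ℕ →₀ ℂ) (k : ℕ) :
    vermaH lam x k = (lam - 2 * k) * x k := by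
  induction x using Finsupp.induction_linear with
  | zero => simp
  | add x y hx hy => simp [hx, hy, mul_add]
  | single n c =>
    simp only [vermaH, lsum_single, LinearMap.toSpanSingleton_apply, smul_single, smul_eq_mul,
      mul_one, single_apply]
    split_ifs with h
    · rw [h, mul_comm]
    · simp

theorem vermaE_apply (lam : ℂ) (x : ℕ →₀ ℂ) (k : ℕ) :
    vermaE lam x k = ((k : ℂ) + 1) * (lam - k) * x (k + 1) := by
  induction x using Finsupp.induction_linear with
  | zero => simp
  | add x y hx hy => simp [hx, hy, mul_add]
  | single n c =>
    simp only [vermaE, lsum_single, LinearMap.toSpanSingleton_apply, smul_single, smul_eq_mul,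
      mul_one, single_apply]
    rcases n with _ | n
    · simp
    · simp only [Nat.add_sub_cancel, add_left_inj]
      split_ifs with h
      · subst h; push_cast; ring
      · simp

theorem Finsupp.supported_ne_bot {α R : Type*} [Semiring R] [Nontrivial R] {s : Set α}
    {a : α} (ha : a ∈ s) : supported R R s ≠ ⊥ := fun h => by
  have := single_mem_supported R (1 : R) ha
  rw [h, Submodule.mem_bot, single_eq_zero] at this
  exact one_ne_zero this

theorem Finsupp.supported_ne_top {α R : Type*} [Semiring R] [Nontrivial R] {s : Set α}
    {a : α} (ha : a ∉ s) : supported R R s ≠ ⊤ := fun h => by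
  have : single a (1 : R) ∈ supported R R s := h ▸ Submodule.mem_top
  exact ha (by simpa [mem_supported] using this)

theorem Finsupp.exists_apply_ne_zero_forall_lt_apply_eq_zero {α M : Type*} [LinearOrder α]
    [Zero M] {x : α →₀ M} (hx : x ≠ 0) : ∃ n, x n ≠ 0 ∧ ∀ k, n < k → x k = 0 := by
  have hsupp : x.support.Nonempty := support_nonempty_iff.mpr hx
  refine ⟨x.support.max' hsupp, mem_support_iff.mp (x.support.max'_mem hsupp), fun k hk => ?_⟩
  by_contra hne
  exact hk.not_ge (x.support.le_max' k (mem_support_iff.mpr hne))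

theorem sl2Invariant_supported_Ioi (m : ℕ) : sl2Invariant m (supported ℂ ℂ (Set.Ioi m)) := by
  simp only [sl2Invariant, mem_supported', Set.mem_Ioi, not_lt]
  intro x hx
  refine ⟨fun k hk => ?_, fun k hk => ?_, fun k hk => ?_⟩
  · rw [vermaE_apply]
    rcases hk.lt_or_eq with hk | rfl
    · rw [hx (k + 1) hk, mul_zero]
    · rw [sub_self, mul_zero, zero_mul]
  · cases k with
    | zero => exact vermaF_apply_zero x
    | succ k => rw [vermaF_apply_succ, hx k (by omega)]
  · rw [vermaH_apply, hx k hk, mul_zero]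

theorem eq_top_of_single_zero_mem {N : Submodule ℂ (ℕ →₀ ℂ)} (hF : ∀ x ∈ N, vermaF x ∈ N)
    (h0 : single 0 1 ∈ N) : N = ⊤ := by
  have hsingle : ∀ k, single k (1 : ℂ) ∈ N := by
    intro k
    induction k with
    | zero => exact h0
    | succ k ih => simpa [vermaF_single] using hF _ ih
  rw [eq_top_iff, ← (Finsupp.basisSingleOne : Module.Basis ℕ ℂ (ℕ →₀ ℂ)).span_eq,
    Submodule.span_le, coe_basisSingleOne]
  rintro _ ⟨k, rfl⟩
  exact hsingle k

theorem single_zero_mem_of_forall_ne_natCast {lam : ℂ} (hlam : ∀ m : ℕ, lam ≠ m)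
    {N : Submodule ℂ (ℕ →₀ ℂ)} (hE : ∀ x ∈ N, vermaE lam x ∈ N) (n : ℕ) {x : ℕ →₀ ℂ}
    (hxN : x ∈ N) (hxn : x n ≠ 0) (htop : ∀ k, n < k → x k = 0) : single 0 1 ∈ N := by
  induction n generalizing x with
  | zero =>
    have hx : x = single 0 (x 0) := by
      ext k
      cases k with
      | zero => simp
      | succ k => simp [htop (k + 1) k.succ_pos]
    have := N.smul_mem (x 0)⁻¹ hxN
    rwa [hx, smul_single, smul_eq_mul, single_eq_same, inv_mul_cancel₀ hxn] at this
  | succ n ih =>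
    refine ih (hE x hxN) ?_ fun k hk => ?_
    · rw [vermaE_apply]
      exact mul_ne_zero (mul_ne_zero (Nat.cast_add_one_ne_zero n) (sub_ne_zero.mpr (hlam n))) hxn
    · rw [vermaE_apply, htop (k + 1) (by omega), mul_zero]

theorem sl2Invariant.eq_bot_or_eq_top {lam : ℂ} (hlam : ∀ m : ℕ, lam ≠ m)
    {N : Submodule ℂ (ℕ →₀ ℂ)} (hN : sl2Invariant lam N) : N = ⊥ ∨ N = ⊤ := by
  refine or_iff_not_imp_left.mpr fun hbot => ?_
  obtain ⟨x, hxN, hx0⟩ := N.ne_bot_iff.mp hbot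
  obtain ⟨n, hxn, htop⟩ := exists_apply_ne_zero_forall_lt_apply_eq_zero hx0
  exact eq_top_of_single_zero_mem (fun y hy => (hN y hy).2.1)
    (single_zero_mem_of_forall_ne_natCast hlam (fun y hy => (hN y hy).1) n hxN hxn htop)

/-- For `sl₂(ℂ)`, the Verma module `M_λ` of highest weight `λ ∈ ℂ` is a simple module if
and only if `λ` is not a nonnegative integer. -/
theorem stmt10 (lam : ℂ) :
    (∀ N : Submodule ℂ (ℕ →₀ ℂ), sl2Invariant lam N → N = ⊥ ∨ N = ⊤) ↔
      ∀ m : ℕ, lam ≠ (m : ℂ) := by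
  refine ⟨fun hsimple m hm => ?_, fun hlam N hN => hN.eq_bot_or_eq_top hlam⟩
  subst hm
  rcases hsimple _ (sl2Invariant_supported_Ioi m) with hbot | htop
  · exact supported_ne_bot (Set.mem_Ioi.mpr m.lt_succ_self) hbot
  · exact supported_ne_top (Set.self_notMem_Ioi (a := m)) htop
end

section
/- For the root system of sl₂: the constant term in z of (1−z)/((1−qz)(1−qz^{−1})), viewed as a formal power series in q with coefficients in Laurent polynomials in z, equals 1/(1+q). -/
open scoped LaurentPolynomial

/-- The series `(1−z)/((1−qz)(1−qz⁻¹))`, viewed as a formal power series in `q` with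
Laurent-polynomial coefficients in `z` (expanding both `1/(1−qz)` and `1/(1−qz⁻¹)` as
geometric series in `q`). -/
noncomputable def rankOneCT : PowerSeries (LaurentPolynomial ℤ) :=
  PowerSeries.C (R := LaurentPolynomial ℤ) (1 - LaurentPolynomial.T 1)
    * PowerSeries.mk (fun n : ℕ => LaurentPolynomial.T (n : ℤ))
    * PowerSeries.mk (fun n : ℕ => LaurentPolynomial.T (-(n : ℤ)))

open LaurentPolynomial Finset in
lemma ct_coeff (N : ℕ) :
    ((PowerSeries.coeff (R := LaurentPolynomial ℤ) N rankOneCT).coeff 0 : ℤ) = (-1) ^ N := by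
  have h1 : (PowerSeries.coeff (R := LaurentPolynomial ℤ) N rankOneCT)
      = ∑ p ∈ Finset.HasAntidiagonal.antidiagonal N, (T ((p.1 : ℤ) - p.2) - T ((p.1 : ℤ) - p.2 + 1)) := by
    rw [rankOneCT, mul_assoc, PowerSeries.coeff_C_mul, PowerSeries.coeff_mul, Finset.mul_sum]
    refine Finset.sum_congr rfl fun p _ => ?_
    rw [PowerSeries.coeff_mk, PowerSeries.coeff_mk, ← T_add, sub_mul, one_mul, ← T_add]
    ring_nf
  rw [h1, AddMonoidAlgebra.coeff_sum, Finsupp.finset_sum_apply]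
  rw [Finset.sum_congr rfl (fun p _ => by rw [AddMonoidAlgebra.coeff_sub, Finsupp.sub_apply, T_apply, T_apply] :
      ∀ p ∈ Finset.HasAntidiagonal.antidiagonal N,
        ((T ((p.1 : ℤ) - p.2) - T ((p.1 : ℤ) - p.2 + 1) : ℤ[T;T⁻¹])).coeff 0
          = (if (p.1 : ℤ) - p.2 = 0 then 1 else 0)
            - (if (p.1 : ℤ) - p.2 + 1 = 0 then 1 else 0)),
    Finset.Nat.sum_antidiagonal_eq_sum_range_succ_mk]
  rcases Nat.even_or_odd N with ⟨m, hm⟩ | ⟨m, hm⟩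
  · have h2 : ∀ k ∈ Finset.range N.succ,
        ((if ((k, N - k).1 : ℤ) - (k, N - k).2 = 0 then (1:ℤ) else 0)
          - if ((k, N - k).1 : ℤ) - (k, N - k).2 + 1 = 0 then 1 else 0)
        = if k = m then 1 else 0 := by
      intro k hk
      rw [Finset.mem_range] at hk
      simp only
      rw [if_congr (show ((k:ℤ) - (N - k : ℕ) = 0) ↔ k = m by omega) rfl rfl,
        if_neg (show ¬((k:ℤ) - (N - k : ℕ) + 1 = 0) by omega), sub_zero]
    rw [Finset.sum_congr rfl h2, Finset.sum_ite_eq' _ m,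
      if_pos (Finset.mem_range.2 (by omega)), Even.neg_one_pow ⟨m, hm⟩]
  · have h2 : ∀ k ∈ Finset.range N.succ,
        ((if ((k, N - k).1 : ℤ) - (k, N - k).2 = 0 then (1:ℤ) else 0)
          - if ((k, N - k).1 : ℤ) - (k, N - k).2 + 1 = 0 then 1 else 0)
        = if k = m then -1 else 0 := by
      intro k hk
      rw [Finset.mem_range] at hk
      simp only
      rw [if_neg (show ¬((k:ℤ) - (N - k : ℕ) = 0) by omega),
        if_congr (show ((k:ℤ) - (N - k : ℕ) + 1 = 0) ↔ k = m by omega) rfl rfl, zero_sub]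
      split <;> simp
    rw [Finset.sum_congr rfl h2, Finset.sum_ite_eq' _ m,
      if_pos (Finset.mem_range.2 (by omega)), Odd.neg_one_pow ⟨m, hm⟩]

/-- For the root system of `sl₂`: the constant term in `z` of
`(1−z)/((1−qz)(1−qz⁻¹))`, as a formal power series in `q`, equals `1/(1+q)`. -/
theorem stmt17 :
    (PowerSeries.mk fun N : ℕ => ((PowerSeries.coeff (R := LaurentPolynomial ℤ) N rankOneCT).coeff 0 : ℤ))
      * (1 + PowerSeries.X) = (1 : PowerSeries ℤ) := by
  have h : (PowerSeries.mk fun N : ℕ =>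
      ((PowerSeries.coeff (R := LaurentPolynomial ℤ) N rankOneCT).coeff 0 : ℤ))
      = PowerSeries.mk fun N : ℕ => (-1 : ℤ) ^ N := by
    ext n
    simp [ct_coeff]
  rw [h]
  ext n
  rw [mul_add, mul_one, map_add]
  cases n with
  | zero => simp
  | succ n =>
    rw [PowerSeries.coeff_succ_mul_X, PowerSeries.coeff_mk, PowerSeries.coeff_mk,
      PowerSeries.coeff_one]
    simp [pow_succ]
end
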